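/- Let Φ : ℝⁿ × ℝⁿ → ℝᵖ be a vector-valued symmetric bilinear form with ∑_k Φ^α_{kk} = 0 for each α. Then |Φ|² ≥ (n/(n-1)) ∑_α (Φ^α_{11})². -/

import Mathlib

/-! Fix α. The diagonal entries `a k = Φ^α_{kk}` sum to zero, so `a 1 = -∑_{k ≠ 1} a k`, and
Cauchy–Schwarz over the remaining `n - 1` indices gives `a 1 ² ≤ (n - 1) ∑_{k ≠ 1} a k ²`, i.e.
`n · a 1 ² ≤ (n - 1) ∑_k a k ²`. The diagonal part of `|Φ^α|²` is at most all of it; summing over α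
finishes the proof. -/

open Finset

theorem card_mul_sq_le_of_sum_eq_zero {ι R : Type*} [DecidableEq ι] [CommRing R] [LinearOrder R]
    [IsStrictOrderedRing R] {s : Finset ι} {a : ι → R} (hs : ∑ k ∈ s, a k = 0) {i : ι}
    (hi : i ∈ s) : (#s : R) * a i ^ 2 ≤ (#s - 1) * ∑ k ∈ s, a k ^ 2 := by
  have hrest : ∑ k ∈ s.erase i, a k = -a i := by
    rw [← add_sum_erase s a hi] at hs
    exact eq_neg_of_add_eq_zero_right hs
  have hcs := sq_sum_le_card_mul_sum_sq (s := s.erase i) (f := a)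
  rw [hrest, neg_sq, card_erase_of_mem hi, Nat.cast_pred (card_pos.mpr ⟨i, hi⟩)] at hcs
  rw [← add_sum_erase s _ hi]
  linear_combination hcs

theorem sum_sq_diag_le_sum_sq {ι : Type*} [Fintype ι] (M : ι → ι → ℝ) :
    ∑ k, M k k ^ 2 ≤ ∑ i, ∑ j, M i j ^ 2 :=
  sum_le_sum fun i _ ↦
    single_le_sum (f := fun j ↦ M i j ^ 2) (fun _ _ ↦ sq_nonneg _) (mem_univ i)

theorem card_mul_sq_diag_le_of_trace_eq_zero {ι : Type*} [Fintype ι] {M : ι → ι → ℝ}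
    (htr : ∑ k, M k k = 0) (i : ι) :
    (Fintype.card ι : ℝ) * M i i ^ 2 ≤ (Fintype.card ι - 1) * ∑ i, ∑ j, M i j ^ 2 := by
  classical
  have hcard : (1 : ℝ) ≤ Fintype.card ι := by exact_mod_cast Fintype.card_pos_iff.mpr ⟨i⟩
  calc (Fintype.card ι : ℝ) * M i i ^ 2
      ≤ (Fintype.card ι - 1) * ∑ k, M k k ^ 2 :=
        card_mul_sq_le_of_sum_eq_zero (a := fun k ↦ M k k) htr (mem_univ i)
    _ ≤ (Fintype.card ι - 1) * ∑ i, ∑ j, M i j ^ 2 :=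
        mul_le_mul_of_nonneg_left (sum_sq_diag_le_sum_sq M) (by linarith)

theorem stmt1 (n p : ℕ) (hn : 2 ≤ n)
    (Φ : Fin p → Fin n → Fin n → ℝ)
    (htr : ∀ α, ∑ k, Φ α k k = 0) :
    (∑ α, ∑ i, ∑ j, (Φ α i j) ^ 2) ≥
      ((n : ℝ) / (n - 1)) * ∑ α, (Φ α ⟨0, by omega⟩ ⟨0, by omega⟩) ^ 2 := by
  have hpos : (0 : ℝ) < n - 1 := by
    have : (2 : ℝ) ≤ n := by exact_mod_cast hn
    linarith
  rw [ge_iff_le, div_mul_eq_mul_div, div_le_iff₀ hpos, mul_sum, sum_mul]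
  refine sum_le_sum fun α _ ↦ ?_
  rw [mul_comm _ ((n : ℝ) - 1)]
  simpa using card_mul_sq_diag_le_of_trace_eq_zero (htr α) ⟨0, by omega⟩
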